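/- arXiv:1805.12119 — 2 statements merged into one kernel-verified Lean document; each statement's English description precedes it below -/
import Mathlib

section
/- Let G be a finite group such that the power graph 𝒢(G) is minimally edge-connected. If x ∈ G has order greater than 2, then the degree of x in 𝒢(G) equals the minimum degree δ(𝒢(G)). -/
open Subgroup

/-- The power graph of a group: distinct `u`, `v` are adjacent iff one is a
positive integer power of the other. -/
def powerGraph (G : Type*) [Group G] : SimpleGraph G where
  Adj u v := u ≠ v ∧ ((∃ n : ℕ, 0 < n ∧ v = u ^ n) ∨ (∃ m : ℕ, 0 < m ∧ u = v ^ m))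
  symm := ⟨fun u v h => ⟨h.1.symm, h.2.symm⟩⟩
  loopless := ⟨fun u h => h.1 rfl⟩

/-- The degree of a vertex in a graph. -/
noncomputable def gDegree {V : Type*} (Γ : SimpleGraph V) (x : V) : ℕ :=
  (Γ.neighborSet x).ncard

/-- The minimum degree δ(Γ) of a graph. -/
noncomputable def gMinDegree {V : Type*} (Γ : SimpleGraph V) : ℕ :=
  sInf (Set.range (gDegree Γ))

/-- The edge-connectivity κ'(Γ): the least size of a set of edges whose deletion
disconnects the graph. -/
noncomputable def edgeConn {V : Type*} (Γ : SimpleGraph V) : ℕ :=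
  sInf {k | ∃ s : Finset (Sym2 V), s.card = k ∧ ↑s ⊆ Γ.edgeSet ∧
    ¬ (Γ.deleteEdges ↑s).Connected}

/-- The vertex connectivity κ(Γ): the least size of a set of vertices whose deletion
disconnects the graph or leaves at most one vertex. -/
noncomputable def vertConn {V : Type*} (Γ : SimpleGraph V) : ℕ :=
  sInf {k | ∃ S : Set V, S.Finite ∧ S.ncard = k ∧
    (¬ (Γ.induce Sᶜ).Preconnected ∨ Sᶜ.Subsingleton)}

/-- A nontrivial connected graph is minimally edge-connected if deleting any edge
drops the edge-connectivity by exactly one. -/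
def MinimallyEdgeConnected {V : Type*} (Γ : SimpleGraph V) : Prop :=
  Nontrivial V ∧ Γ.Connected ∧
    ∀ e ∈ Γ.edgeSet, edgeConn (Γ.deleteEdges {e}) = edgeConn Γ - 1

/-- A nontrivial connected graph is minimally connected if deleting any edge
drops the vertex connectivity by exactly one. -/
def MinimallyConnected {V : Type*} (Γ : SimpleGraph V) : Prop :=
  Nontrivial V ∧ Γ.Connected ∧
    ∀ e ∈ Γ.edgeSet, vertConn (Γ.deleteEdges {e}) = vertConn Γ - 1

/-- `S` is a separating set of `Γ` if deleting the vertices of `S` leaves a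
disconnected graph. -/
def IsSeparatingSet {V : Type*} (Γ : SimpleGraph V) (S : Set V) : Prop :=
  ¬ (Γ.induce Sᶜ).Preconnected

/-- `S` is a minimum separating set of `Γ`. -/
def IsMinSeparatingSet {V : Type*} (Γ : SimpleGraph V) (S : Set V) : Prop :=
  IsSeparatingSet Γ S ∧ ∀ T : Set V, IsSeparatingSet Γ T → S.ncard ≤ T.ncard

/-- `y` generates a maximal cyclic subgroup of `G`: the cyclic subgroup `⟨y⟩` is
not properly contained in any cyclic subgroup. -/
def IsMaxCyclicGen {G : Type*} [Group G] (y : G) : Prop :=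
  ∀ z : G, zpowers y ≤ zpowers z → zpowers y = zpowers z

/-- A subgroup is maximal cyclic if it is cyclic and not properly contained in
any cyclic subgroup. -/
def IsMaximalCyclicSubgroup {G : Type*} [Group G] (H : Subgroup G) : Prop :=
  (∃ y : G, H = zpowers y) ∧ ∀ z : G, H ≤ zpowers z → H = zpowers z

/-! Since `x` and `x⁻¹` generate the same cyclic subgroup, every neighbour of `x` other than `x⁻¹`
is also a neighbour of `x⁻¹`. Minimality, applied to the edge `{x, x⁻¹}`, gives a set `F` of at
most `κ'` edges whose removal separates `x` from `x⁻¹`. Each neighbour `w` of `x` then accounts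
for its own edge of `F`: `xw` if it is cut, and `x⁻¹w` otherwise. Hence
`deg x ≤ κ' ≤ δ ≤ deg x`. -/

open SimpleGraph

section EdgeConnectivity

variable {V : Type*} {Γ : SimpleGraph V}

lemma edgeConn_le_card {s : Finset (Sym2 V)} (hs : ↑s ⊆ Γ.edgeSet)
    (h : ¬ (Γ.deleteEdges ↑s).Connected) : edgeConn Γ ≤ s.card :=
  Nat.sInf_le ⟨s, rfl, hs, h⟩

lemma gDegree_le_card_of_not_reachable {u v : V} (hdom : ∀ w, Γ.Adj u w → w ≠ v → Γ.Adj v w)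
    {F : Finset (Sym2 V)} (hF : ¬ (Γ.deleteEdges ↑F).Reachable u v) : gDegree Γ u ≤ F.card := by
  classical
  have hcut : ∀ w, Γ.Adj u w → s(u, w) ∉ F → s(v, w) ∈ F := by
    intro w huw huwF
    have hreach : (Γ.deleteEdges ↑F).Reachable u w := (deleteEdges_adj.mpr ⟨huw, huwF⟩).reachable
    have hwv : w ≠ v := by rintro rfl; exact hF hreach
    by_contra hvwF
    exact hF (hreach.trans (deleteEdges_adj.mpr ⟨hdom w huw hwv, hvwF⟩).reachable.symm)
  have huv : u ≠ v := by rintro rfl; exact hF Reachable.rfl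
  have hdisjoint : ∀ {w₁ w₂}, Γ.Adj u w₂ → s(u, w₁) ≠ s(v, w₂) := by
    intro w₁ w₂ huw₂ heq
    rcases Sym2.eq_iff.mp heq with ⟨h, -⟩ | ⟨h, -⟩
    exacts [huv h, Γ.ne_of_adj huw₂ h]
  let f : V → Sym2 V := fun w => if s(u, w) ∈ F then s(u, w) else s(v, w)
  refine (Set.ncard_le_ncard_of_injOn f ?_ ?_ F.finite_toSet).trans (Set.ncard_coe_finset F).le
  · intro w hw
    dsimp only [f]
    split_ifs with huwF
    exacts [huwF, hcut w hw huwF]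
  · intro w₁ hw₁ w₂ hw₂ heq
    simp only [f] at heq
    split_ifs at heq with h₁ h₂ h₂
    · exact Sym2.congr_right.mp heq
    · exact (hdisjoint hw₂ heq).elim
    · exact (hdisjoint hw₁ heq.symm).elim
    · exact Sym2.congr_right.mp heq

variable [Finite V] [Nontrivial V]

lemma exists_finset_card_eq_edgeConn (Γ : SimpleGraph V) :
    ∃ s : Finset (Sym2 V), s.card = edgeConn Γ ∧ ↑s ⊆ Γ.edgeSet ∧
      ¬ (Γ.deleteEdges ↑s).Connected := by
  suffices h : {k | ∃ s : Finset (Sym2 V), s.card = k ∧ ↑s ⊆ Γ.edgeSet ∧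
      ¬ (Γ.deleteEdges ↑s).Connected}.Nonempty from Nat.sInf_mem h
  refine ⟨_, Γ.edgeSet.toFinite.toFinset, rfl, by simp, fun hc => ?_⟩
  obtain ⟨a, b, hab⟩ := exists_pair_ne V
  refine not_reachable_of_neighborSet_left_eq_empty hab ?_ (hc.preconnected a b)
  ext w
  simp

lemma edgeConn_pos (hΓ : Γ.Connected) : 0 < edgeConn Γ := by
  obtain ⟨s, hcard, -, hs⟩ := exists_finset_card_eq_edgeConn Γ
  refine Nat.pos_of_ne_zero fun h0 => hs ?_
  rwa [Finset.card_eq_zero.mp (hcard.trans h0), Finset.coe_empty, deleteEdges_empty]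

lemma edgeConn_le_gDegree (Γ : SimpleGraph V) (y : V) : edgeConn Γ ≤ gDegree Γ y := by
  classical
  have hfin : (Γ.incidenceSet y).Finite := Set.toFinite _
  have hcard : hfin.toFinset.card = gDegree Γ y := by
    rw [← Set.ncard_eq_toFinset_card _ hfin, gDegree, ← Nat.card_coe_set_eq,
      ← Nat.card_coe_set_eq]
    exact Nat.card_congr (Γ.incidenceSetEquivNeighborSet y)
  refine hcard ▸ edgeConn_le_card (by simpa using Γ.incidenceSet_subset y) fun hc => ?_
  obtain ⟨z, hz⟩ := exists_ne y
  refine not_reachable_of_neighborSet_left_eq_empty hz.symm ?_ (hc.preconnected y z)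
  ext w
  simp [incidenceSet]

lemma edgeConn_le_gMinDegree (Γ : SimpleGraph V) : edgeConn Γ ≤ gMinDegree Γ :=
  le_csInf (Set.range_nonempty _) (Set.forall_mem_range.mpr (edgeConn_le_gDegree Γ))

lemma exists_finset_not_reachable_of_edgeConn_deleteEdges (hΓ : Γ.Connected) {u v : V}
    (h : edgeConn (Γ.deleteEdges {s(u, v)}) = edgeConn Γ - 1) :
    ∃ F : Finset (Sym2 V), F.card ≤ edgeConn Γ ∧ ¬ (Γ.deleteEdges ↑F).Reachable u v := by
  classical
  obtain ⟨s, hcard, hsub, hdisc⟩ := exists_finset_card_eq_edgeConn (Γ.deleteEdges {s(u, v)})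
  have hpos := edgeConn_pos hΓ
  -- `s` is too small to disconnect `Γ`, so `s(u, v)` must be a bridge of `Γ - s`.
  have hconn : (Γ.deleteEdges ↑s).Connected := by
    by_contra hc
    have := edgeConn_le_card (hsub.trans (edgeSet_mono (deleteEdges_le _))) hc
    omega
  have hbridge : (Γ.deleteEdges ↑s).IsBridge s(u, v) := by
    by_contra hb
    refine hdisc ?_
    rw [deleteEdges_deleteEdges, Set.union_comm, ← deleteEdges_deleteEdges]
    exact hconn.connected_delete_edge_of_not_isBridge hb
  refine ⟨insert s(u, v) s, (Finset.card_insert_le _ _).trans (by omega), ?_⟩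
  rw [Finset.coe_insert, Set.insert_eq, Set.union_comm, ← deleteEdges_deleteEdges]
  exact isBridge_iff.mp hbridge

end EdgeConnectivity

theorem MinimallyEdgeConnected.gDegree_eq_gMinDegree_of_dominated {V : Type*} [Finite V]
    {Γ : SimpleGraph V} (h : MinimallyEdgeConnected Γ) {u v : V} (huv : Γ.Adj u v)
    (hdom : ∀ w, Γ.Adj u w → w ≠ v → Γ.Adj v w) : gDegree Γ u = gMinDegree Γ := by
  obtain ⟨_, hconn, hmin⟩ := h
  obtain ⟨F, hcard, hF⟩ := exists_finset_not_reachable_of_edgeConn_deleteEdges hconn (hmin _ huv)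
  refine le_antisymm ?_ (Nat.sInf_le ⟨u, rfl⟩)
  calc gDegree Γ u ≤ F.card := gDegree_le_card_of_not_reachable hdom hF
    _ ≤ edgeConn Γ := hcard
    _ ≤ gMinDegree Γ := edgeConn_le_gMinDegree Γ

section PowerGraph

variable {G : Type*} [Group G]

lemma exists_pos_pow_eq_iff_mem_zpowers [Finite G] {x y : G} :
    (∃ n : ℕ, 0 < n ∧ y = x ^ n) ↔ y ∈ zpowers x := by
  refine ⟨fun ⟨n, _, hn⟩ => hn ▸ pow_mem (mem_zpowers x) n, fun hy => ?_⟩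
  obtain ⟨n, rfl⟩ := mem_powers_iff_mem_zpowers.mpr hy
  refine ⟨n + orderOf x, by have := orderOf_pos x; omega, ?_⟩
  rw [pow_add, pow_orderOf_eq_one, mul_one]

lemma powerGraph_adj_iff [Finite G] {u v : G} :
    (powerGraph G).Adj u v ↔ u ≠ v ∧ (v ∈ zpowers u ∨ u ∈ zpowers v) := by
  simp only [powerGraph, exists_pos_pow_eq_iff_mem_zpowers]

lemma powerGraph_adj_of_zpowers_eq [Finite G] {x y w : G} (hxy : zpowers x = zpowers y)
    (h : (powerGraph G).Adj x w) (hw : w ≠ y) : (powerGraph G).Adj y w := by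
  obtain ⟨-, hwx | hxw⟩ := powerGraph_adj_iff.mp h
  · exact powerGraph_adj_iff.mpr ⟨hw.symm, .inl (hxy ▸ hwx)⟩
  · exact powerGraph_adj_iff.mpr ⟨hw.symm, .inr (zpowers_le.mp (hxy ▸ zpowers_le.mpr hxw))⟩

lemma ne_inv_of_two_lt_orderOf {x : G} (hx : 2 < orderOf x) : x ≠ x⁻¹ := fun h =>
  have hdvd := orderOf_dvd_of_pow_eq_one (by rw [sq]; exact mul_eq_one_iff_eq_inv.mpr h)
  hx.not_ge (Nat.le_of_dvd two_pos hdvd)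

lemma powerGraph_adj_inv [Finite G] {x : G} (hx : 2 < orderOf x) : (powerGraph G).Adj x x⁻¹ :=
  powerGraph_adj_iff.mpr ⟨ne_inv_of_two_lt_orderOf hx, .inl (inv_mem (mem_zpowers x))⟩

end PowerGraph

/-- If the power graph of a finite group is minimally edge-connected and `x` has
order greater than 2, then the degree of `x` equals the minimum degree. -/
theorem stmt_2 (G : Type*) [Group G] [Fintype G]
    (h : MinimallyEdgeConnected (powerGraph G)) (x : G) (hx : 2 < orderOf x) :
    gDegree (powerGraph G) x = gMinDegree (powerGraph G) :=
  h.gDegree_eq_gMinDegree_of_dominated (powerGraph_adj_inv hx)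
    fun _ hw hne => powerGraph_adj_of_zpowers_eq zpowers_inv.symm hw hne
end

section
/- Let G be a finite group and let Γ be an induced subgraph of the power graph 𝒢(G) whose vertex set contains the identity element of G. Then the edge-connectivity of Γ equals its minimum degree: κ'(Γ) = δ(Γ). -/
open Subgroup

/-! The identity is adjacent in `𝒢(G)` to every other element `g`, as `1 = g ^ orderOf g`, so `Γ`
has a universal vertex `v`. If deleting a set `E` of edges separates some `u` from `v`, then every
neighbour `x` of `u` is cut off by an edge of `E`: by `s(u, x)` if `x` is still on the side of `v`,
by `s(v, x)` otherwise. These edges are distinct, so `deg u ≤ |E|`. Deleting the edges at a vertex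
of minimum degree gives the reverse inequality. -/

namespace SimpleGraph

variable {V : Type*} {Γ : SimpleGraph V}

def edgeCutCards (Γ : SimpleGraph V) : Set ℕ :=
  {k | ∃ s : Finset (Sym2 V), s.card = k ∧ ↑s ⊆ Γ.edgeSet ∧ ¬ (Γ.deleteEdges ↑s).Connected}

lemma edgeConn_eq_sInf_edgeCutCards : edgeConn Γ = sInf (edgeCutCards Γ) := rfl

lemma gDegree_eq_ncard_incidenceSet (x : V) : gDegree Γ x = (Γ.incidenceSet x).ncard := by
  classical exact (Set.ncard_congr' (Γ.incidenceSetEquivNeighborSet x)).symm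

lemma not_connected_deleteEdges_incidenceSet [Nontrivial V] (x : V) :
    ¬ (Γ.deleteEdges (Γ.incidenceSet x)).Connected := fun h ↦ by
  obtain ⟨y, hxy⟩ := h.preconnected.exists_adj_of_nontrivial x
  rw [deleteEdges_adj, mem_incidenceSet] at hxy
  exact hxy.2 hxy.1

lemma gDegree_mem_edgeCutCards [Finite V] [Nontrivial V] (x : V) :
    gDegree Γ x ∈ edgeCutCards Γ := by
  have hfin := (Γ.incidenceSet x).toFinite
  refine ⟨hfin.toFinset, ?_, ?_, ?_⟩
  · rw [gDegree_eq_ncard_incidenceSet, Set.ncard_eq_toFinset_card _ hfin]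
  · simpa using Γ.incidenceSet_subset x
  · simpa using not_connected_deleteEdges_incidenceSet x

lemma edgeConn_le_gMinDegree [Finite V] [Nontrivial V] : edgeConn Γ ≤ gMinDegree Γ := by
  obtain ⟨x, hx⟩ := Nat.sInf_mem (Set.range_nonempty (gDegree Γ))
  rw [gMinDegree, ← hx]
  exact Nat.sInf_le (gDegree_mem_edgeCutCards x)

lemma mem_of_adj_of_reachable_of_not_reachable {E : Set (Sym2 V)} {v a b : V}
    (hab : Γ.Adj a b) (ha : (Γ.deleteEdges E).Reachable v a)
    (hb : ¬ (Γ.deleteEdges E).Reachable v b) : s(a, b) ∈ E := by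
  by_contra h
  exact hb (ha.trans ((deleteEdges_adj ..).2 ⟨hab, h⟩).reachable)

lemma gDegree_le_ncard_of_not_reachable_deleteEdges {E : Set (Sym2 V)} (hE : E.Finite)
    {v u : V} (hv : Γ.IsUniversal v) (hu : ¬ (Γ.deleteEdges E).Reachable v u) :
    gDegree Γ u ≤ E.ncard := by
  classical
  set R := (Γ.deleteEdges E).Reachable v
  let f : V → Sym2 V := fun x ↦ if R x then s(u, x) else s(v, x)
  refine Set.ncard_le_ncard_of_injOn f (fun x (hx : Γ.Adj u x) ↦ ?_) (fun x hx y hy hxy ↦ ?_) hE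
  · by_cases hr : R x
    · simpa only [f, if_pos hr, Sym2.eq_swap] using
        mem_of_adj_of_reachable_of_not_reachable hx.symm hr hu
    · have hvx : v ≠ x := fun h ↦ hr (h ▸ Reachable.rfl)
      simpa only [f, if_neg hr] using
        mem_of_adj_of_reachable_of_not_reachable (hv hvx) Reachable.rfl hr
  · have hvu : v ≠ u := fun h ↦ hu (h ▸ Reachable.rfl)
    have hux : u ≠ x := Adj.ne hx
    have huy : u ≠ y := Adj.ne hy
    by_cases hrx : R x <;> by_cases hry : R y <;>
      simp only [f, hrx, hry, if_true, if_false, Sym2.eq_iff] at hxy <;> grind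

lemma gMinDegree_le_edgeConn [Finite V] [Nontrivial V] {v : V} (hv : Γ.IsUniversal v) :
    gMinDegree Γ ≤ edgeConn Γ := by
  obtain ⟨E, hcard, -, hE⟩ := Nat.sInf_mem ⟨_, gDegree_mem_edgeCutCards (Γ := Γ) v⟩
  obtain ⟨u, hu⟩ : ∃ u, ¬ (Γ.deleteEdges ↑E).Reachable v u := by
    by_contra! h
    exact hE (connected_iff _ |>.2 ⟨fun a b ↦ (h a).symm.trans (h b), ⟨v⟩⟩)
  calc gMinDegree Γ ≤ gDegree Γ u := Nat.sInf_le ⟨u, rfl⟩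
    _ ≤ (E : Set (Sym2 V)).ncard :=
      gDegree_le_ncard_of_not_reachable_deleteEdges E.finite_toSet hv hu
    _ = edgeConn Γ := by rw [Set.ncard_coe_finset, hcard, edgeConn_eq_sInf_edgeCutCards]

lemma edgeConn_eq_gMinDegree_of_subsingleton [Subsingleton V] : edgeConn Γ = gMinDegree Γ := by
  rw [edgeConn_eq_sInf_edgeCutCards, gMinDegree]
  rcases isEmpty_or_nonempty V with hV | hV
  · have hcut : 0 ∈ edgeCutCards Γ :=
      ⟨∅, rfl, by simp, fun h ↦ isEmptyElim h.nonempty.some⟩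
    rw [Nat.sInf_eq_zero.2 (.inl hcut), Set.range_eq_empty, Nat.sInf_empty]
  · have hcut : edgeCutCards Γ = ∅ :=
      Set.eq_empty_of_forall_notMem fun _ ⟨_, _, _, h⟩ ↦ h .of_subsingleton
    obtain ⟨v⟩ := hV
    have hdeg : 0 ∈ Set.range (gDegree Γ) :=
      ⟨v, by simp [gDegree, neighborSet, Subsingleton.elim _ v]⟩
    rw [hcut, Nat.sInf_empty, Nat.sInf_eq_zero.2 (.inl hdeg)]

theorem edgeConn_eq_gMinDegree_of_isUniversal [Finite V] {v : V} (hv : Γ.IsUniversal v) :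
    edgeConn Γ = gMinDegree Γ := by
  rcases subsingleton_or_nontrivial V with hV | hV
  · exact edgeConn_eq_gMinDegree_of_subsingleton
  · exact le_antisymm edgeConn_le_gMinDegree (gMinDegree_le_edgeConn hv)

end SimpleGraph

lemma powerGraph_adj_one {G : Type*} [Group G] {x : G} (hx : IsOfFinOrder x) (hne : x ≠ 1) :
    (powerGraph G).Adj 1 x :=
  ⟨hne.symm, .inr ⟨orderOf x, orderOf_pos_iff.2 hx, (pow_orderOf_eq_one x).symm⟩⟩

/-- For any induced subgraph of the power graph of a finite group containing the
identity, the edge-connectivity equals the minimum degree. -/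
theorem stmt_7 (G : Type*) [Group G] [Fintype G] (s : Set G) (hs : (1 : G) ∈ s) :
    edgeConn ((powerGraph G).induce s) = gMinDegree ((powerGraph G).induce s) :=
  SimpleGraph.edgeConn_eq_gMinDegree_of_isUniversal (v := ⟨1, hs⟩) fun _ hw ↦
    powerGraph_adj_one (isOfFinOrder_of_finite _) fun h ↦ hw (Subtype.ext h.symm)
end
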